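/- arXiv:2412.13675 — 2 statements merged into one kernel-verified Lean document; each statement's English description precedes it below -/
import Mathlib

section
/- In the large Schröder monoid LS_n, two elements α and β are R*-related if and only if ker α = ker β (the partitions of their domains into fibers coincide, including equality of domains). -/
/-- Partial transformations of the chain `Fin n`. -/
abbrev PT (n : ℕ) := Fin n → Option (Fin n)

/-- Composition of partial transformations: apply `α` first, then `β`. -/
def comp {n : ℕ} (α β : PT n) : PT n := fun x => (α x).bind β

/-- `α` is isotone (order-preserving on its domain). -/
def IsIsotone {n : ℕ} (α : PT n) : Prop :=
  ∀ x y a b : Fin n, α x = some a → α y = some b → x ≤ y → a ≤ b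

/-- `α` is order-decreasing on its domain. -/
def IsDecreasing {n : ℕ} (α : PT n) : Prop :=
  ∀ x a : Fin n, α x = some a → a ≤ x

/-- The large Schröder monoid: isotone, order-decreasing partial transformations. -/
def LS (n : ℕ) : Set (PT n) := {α | IsIsotone α ∧ IsDecreasing α}

/-- The image of a partial transformation. -/
def Im {n : ℕ} (α : PT n) : Set (Fin n) := {y | ∃ x, α x = some y}

/-- The height of a partial transformation is the size of its image. -/
noncomputable def height {n : ℕ} (α : PT n) : ℕ := (Im α).ncard

/-- The kernel of `α`, as a set of pairs of elements of the domain. -/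
def kerS {n : ℕ} (α : PT n) : Set (Fin n × Fin n) :=
  {p | ∃ a : Fin n, α p.1 = some a ∧ α p.2 = some a}

/-- The set of fixed points of `α`. -/
def FixPts {n : ℕ} (α : PT n) : Set (Fin n) := {x | α x = some x}

/-- The `R*` relation on `LS n` (with quantifiers over `LS n`, which contains the identity). -/
def RStar (n : ℕ) (α β : PT n) : Prop :=
  ∀ γ ∈ LS n, ∀ δ ∈ LS n, (comp γ α = comp δ α ↔ comp γ β = comp δ β)

/-!
Write `γα` for `comp γ α` (first `γ`, then `α`) and test `R*` against left factors from `LS n`.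
With `γ` the identity on `dom β` and `δ` the identity, `γβ = δβ`, so `γα = δα`, which forces
`dom α ⊆ dom β`. If `xα = yα` with `x ≤ y`, isotony makes `α` constant on `[x, y] ∩ dom α`, so
collapsing that set onto `x` (fixing the rest of `dom α`) leaves `α` unchanged; hence it leaves `β`
unchanged too, and `xβ = yβ`. Conversely, `γα` is determined pointwise by `ker α`, whose diagonal
is `dom α`.
-/

section

variable {n : ℕ}

lemma mk_self_mem_kerS (α : PT n) (u : Fin n) : (u, u) ∈ kerS α ↔ (α u).isSome := by
  simp [kerS, Option.isSome_iff_exists]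

lemma isSome_iff_of_kerS_eq {α β : PT n} (h : kerS α = kerS β) (u : Fin n) :
    (α u).isSome ↔ (β u).isSome := by
  rw [← mk_self_mem_kerS, h, mk_self_mem_kerS]

lemma eq_none_of_kerS_eq {α β : PT n} (h : kerS α = kerS β) {u : Fin n} (hu : α u = none) :
    β u = none := by
  rw [← Option.not_isSome_iff_eq_none, ← isSome_iff_of_kerS_eq h, Option.not_isSome_iff_eq_none]
  exact hu

lemma apply_eq_apply_of_kerS_eq {α β : PT n} (h : kerS α = kerS β) {u v : Fin n}
    (huv : α u = α v) : β u = β v := by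
  cases hu : α u with
  | none => rw [eq_none_of_kerS_eq h hu, eq_none_of_kerS_eq h (huv ▸ hu)]
  | some a =>
    obtain ⟨b, hub, hvb⟩ : (u, v) ∈ kerS β := h ▸ ⟨a, hu, huv ▸ hu⟩
    rw [hub, hvb]

lemma bind_eq_bind_of_kerS_eq {α β : PT n} (h : kerS α = kerS β) {o o' : Option (Fin n)}
    (hoo' : o.bind α = o'.bind α) : o.bind β = o'.bind β := by
  rcases o with _ | u <;> rcases o' with _ | v <;>
    simp only [Option.bind_none, Option.bind_some] at hoo' ⊢
  · exact (eq_none_of_kerS_eq h hoo'.symm).symm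
  · exact eq_none_of_kerS_eq h hoo'
  · exact apply_eq_apply_of_kerS_eq h hoo'

lemma comp_eq_comp_of_kerS_eq {α β γ δ : PT n} (h : kerS α = kerS β)
    (hγδ : comp γ α = comp δ α) : comp γ β = comp δ β :=
  funext fun z => bind_eq_bind_of_kerS_eq h (congrFun hγδ z)

lemma rstar_of_kerS_eq {α β : PT n} (h : kerS α = kerS β) : RStar n α β :=
  fun _ _ _ _ => ⟨comp_eq_comp_of_kerS_eq h, comp_eq_comp_of_kerS_eq h.symm⟩

lemma RStar.symm {α β : PT n} (hR : RStar n α β) : RStar n β α :=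
  fun γ hγ δ hδ => (hR γ hγ δ hδ).symm

lemma some_mem_LS : (some : PT n) ∈ LS n :=
  ⟨fun _ _ _ _ hx hy _ => by simp_all, fun _ _ hx => by simp_all⟩

lemma comp_some (α : PT n) : comp some α = α := rfl

def domId (α : PT n) : PT n := fun z => if (α z).isSome then some z else none

lemma domId_mem_LS (α : PT n) : domId α ∈ LS n := by
  constructor
  · intro x y a b hx hy hxy
    simp only [domId] at hx hy
    split_ifs at hx hy
    simp_all
  · intro x a hx
    simp only [domId] at hx
    split_ifs at hx
    simp_all

lemma comp_domId_apply (α β : PT n) (z : Fin n) :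
    comp (domId α) β z = if (α z).isSome then β z else none := by
  simp only [comp, domId]
  split_ifs <;> rfl

lemma comp_domId_self (α : PT n) : comp (domId α) α = α := by
  funext z
  rw [comp_domId_apply]
  split_ifs with h
  · rfl
  · exact (Option.not_isSome_iff_eq_none.mp h).symm

def collapse (α : PT n) (x y : Fin n) : PT n :=
  fun z => if (α z).isSome then (if x ≤ z ∧ z ≤ y then some x else some z) else none

lemma collapse_mem_LS (α : PT n) (x y : Fin n) : collapse α x y ∈ LS n := by
  constructor
  · intro z w u v hz hw hzw
    simp only [collapse] at hz hw
    split_ifs at hz hw <;> simp_all <;> omega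
  · intro z u hz
    simp only [collapse] at hz
    split_ifs at hz <;> simp_all

lemma comp_collapse_self {α : PT n} (hα : IsIsotone α) {x y a : Fin n}
    (hx : α x = some a) (hy : α y = some a) : comp (collapse α x y) α = α := by
  funext z
  simp only [comp, collapse]
  split_ifs with hz hxzy
  · obtain ⟨c, hc⟩ := Option.isSome_iff_exists.mp hz
    have hca : c = a := le_antisymm (hα z y c a hc hy hxzy.2) (hα x z a c hx hc hxzy.1)
    rw [Option.bind_some, hx, hc, hca]
  · rfl
  · exact (Option.not_isSome_iff_eq_none.mp hz).symm

lemma isSome_of_rstar {α β : PT n} (hR : RStar n α β) {x : Fin n} (hx : (α x).isSome) :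
    (β x).isSome := by
  have hβ : comp (domId β) β = comp some β := by rw [comp_domId_self, comp_some]
  have hα := congrFun ((hR _ (domId_mem_LS β) _ some_mem_LS).mpr hβ) x
  rw [comp_domId_apply, comp_some] at hα
  by_contra hxβ
  rw [if_neg hxβ] at hα
  simp [← hα] at hx

lemma apply_eq_apply_of_rstar_of_le {α β : PT n} (hα : IsIsotone α) (hR : RStar n α β)
    {x y a : Fin n} (hx : α x = some a) (hy : α y = some a) (hxy : x ≤ y) : β x = β y := by
  have hcomp : comp (collapse α x y) α = comp (domId α) α := by
    rw [comp_collapse_self hα hx hy, comp_domId_self]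
  have hy' := congrFun ((hR _ (collapse_mem_LS α x y) _ (domId_mem_LS α)).mp hcomp) y
  rw [comp_domId_apply, hy, Option.isSome_some, if_pos rfl] at hy'
  simpa [comp, collapse, hy, hxy] using hy'

lemma kerS_subset_of_rstar {α β : PT n} (hα : IsIsotone α) (hR : RStar n α β) :
    kerS α ⊆ kerS β := by
  rintro ⟨x, y⟩ ⟨a, hx, hy⟩
  obtain ⟨b, hxb⟩ :=
    Option.isSome_iff_exists.mp (isSome_of_rstar hR (Option.isSome_iff_exists.mpr ⟨a, hx⟩))
  have hxy : β x = β y := by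
    rcases le_total x y with h | h
    · exact apply_eq_apply_of_rstar_of_le hα hR hx hy h
    · exact (apply_eq_apply_of_rstar_of_le hα hR hy hx h).symm
  exact ⟨b, hxb, hxy ▸ hxb⟩

end

theorem LS_Rstar_iff_ker_eq (n : ℕ) (α β : PT n) (hα : α ∈ LS n) (hβ : β ∈ LS n) :
    RStar n α β ↔ kerS α = kerS β :=
  ⟨fun hR => (kerS_subset_of_rstar hα.1 hR).antisymm (kerS_subset_of_rstar hβ.1 hR.symm),
    rstar_of_kerS_eq⟩
end

section
/- The large Schröder monoid LS_n is abundant: every L*-class and every R*-class of LS_n contains an idempotent. Concretely, for each α ∈ LS_n, the identity map on Im α is an idempotent L*-related to α, and the map sending each kernel class of α to its minimum is an idempotent R*-related to α. -/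
/-- The `L*` relation on `LS n` (with quantifiers over `LS n`, which contains the identity). -/
def LStar (n : ℕ) (α β : PT n) : Prop :=
  ∀ γ ∈ LS n, ∀ δ ∈ LS n, (comp α γ = comp α δ ↔ comp β γ = comp β δ)

/-!
Write `αγ` for `comp α γ` (first `α`, then `γ`). Since `αγ` depends only on `γ` restricted to
`Im α`, any two maps with the same image are `L*`-related, and the identity on `Im α` is such an
idempotent. Dually `γα` depends only on the kernel of `α` (including its domain), and sending each
point of the domain to the least element of its `α`-fibre is an idempotent with that same kernel;
it is isotone because, for isotone `α`, distinct fibres are ordered like their values.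
-/

section IdOn

variable {n : ℕ}

open Classical in
noncomputable def idOn (S : Set (Fin n)) : PT n := fun y => if y ∈ S then some y else none

lemma idOn_eq_some_iff {S : Set (Fin n)} {y a : Fin n} : idOn S y = some a ↔ y ∈ S ∧ y = a := by
  unfold idOn
  split_ifs with h <;> simp [h]

lemma idOn_mem_LS (S : Set (Fin n)) : idOn S ∈ LS n := by
  refine ⟨fun x y a b hx hy hxy => ?_, fun x a hx => ?_⟩
  · rw [idOn_eq_some_iff] at hx hy
    rwa [← hx.2, ← hy.2]
  · exact (idOn_eq_some_iff.1 hx).2.ge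

lemma comp_idOn_self (S : Set (Fin n)) : comp (idOn S) (idOn S) = idOn S := by
  funext y
  by_cases h : y ∈ S <;> simp [comp, idOn, h]

lemma Im_idOn (S : Set (Fin n)) : Im (idOn S) = S := by
  ext y
  simp [Im, idOn_eq_some_iff]

end IdOn

section LStar

variable {n : ℕ}

lemma comp_eq_comp_iff_eqOn_Im (α γ δ : PT n) : comp α γ = comp α δ ↔ Set.EqOn γ δ (Im α) := by
  constructor
  · rintro h y ⟨x, hx⟩
    simpa [comp, hx] using congrFun h x
  · intro h
    funext x
    cases hx : α x with
    | none => simp [comp, hx]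
    | some y => simpa [comp, hx] using h ⟨x, hx⟩

lemma LStar_of_Im_eq {α β : PT n} (h : Im α = Im β) : LStar n α β := by
  intro γ _ δ _
  rw [comp_eq_comp_iff_eqOn_Im, comp_eq_comp_iff_eqOn_Im, h]

end LStar

lemma Option.bind_eq_bind_iff_of_ker_eq {X Y Z : Type*} {f : X → Option Y} {g : X → Option Z}
    (hker : ∀ u v, f u = f v ↔ g u = g v) (hdom : ∀ u, f u = none ↔ g u = none)
    (o o' : Option X) : o.bind f = o'.bind f ↔ o.bind g = o'.bind g := by
  cases o <;> cases o' <;> simp [hker, hdom, eq_comm (a := none)]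

lemma RStar_of_ker_eq {n : ℕ} {α β : PT n} (hker : ∀ u v, α u = α v ↔ β u = β v)
    (hdom : ∀ u, α u = none ↔ β u = none) : RStar n α β := by
  intro γ _ δ _
  simp only [funext_iff, comp, Option.bind_eq_bind_iff_of_ker_eq hker hdom]

section FiberMin

variable {ι β : Type*} [Fintype ι] [LinearOrder ι] [DecidableEq β]

def fiberMin (f : ι → β) (x : ι) : ι :=
  (Finset.univ.filter fun z => f z = f x).min' ⟨x, by simp⟩

lemma apply_fiberMin (f : ι → β) (x : ι) : f (fiberMin f x) = f x :=
  (Finset.mem_filter.1 (Finset.min'_mem (Finset.univ.filter fun z => f z = f x) _)).2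

lemma fiberMin_le (f : ι → β) (x : ι) : fiberMin f x ≤ x :=
  Finset.min'_le _ _ (by simp)

lemma fiberMin_congr (f : ι → β) {x y : ι} (h : f x = f y) : fiberMin f x = fiberMin f y := by
  simp only [fiberMin, h]

end FiberMin

section KerMin

variable {n : ℕ}

lemma fiberMin_mono {α : PT n} (hα : IsIsotone α) {x y p q : Fin n} (hx : α x = some p)
    (hy : α y = some q) (hxy : x ≤ y) : fiberMin α x ≤ fiberMin α y := by
  by_contra! hlt
  have hpq : p = q := le_antisymm (hα _ _ _ _ hx hy hxy)
    (hα _ _ _ _ ((apply_fiberMin α y).trans hy) ((apply_fiberMin α x).trans hx) hlt.le)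
  exact hlt.ne (fiberMin_congr α (by rw [hx, hy, hpq])).symm

def kerMin (α : PT n) : PT n := fun x => (α x).map fun _ => fiberMin α x

lemma kerMin_eq_none_iff (α : PT n) (x : Fin n) : kerMin α x = none ↔ α x = none := by
  simp [kerMin]

lemma kerMin_eq_some_iff {α : PT n} {x a : Fin n} :
    kerMin α x = some a ↔ (∃ p, α x = some p) ∧ fiberMin α x = a := by
  cases h : α x <;> simp [kerMin, h]

lemma kerMin_eq_kerMin_iff (α : PT n) (u v : Fin n) : kerMin α u = kerMin α v ↔ α u = α v := by
  refine ⟨fun h => ?_, fun h => by simp only [kerMin, h, fiberMin_congr α h]⟩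
  cases hu : α u <;> cases hv : α v <;> simp only [kerMin, hu, hv, Option.map] at h ⊢
  · simp at h
  · simp at h
  · rw [← hu, ← hv, ← apply_fiberMin α u, ← apply_fiberMin α v, Option.some_injective _ h]

lemma kerMin_mem_LS {α : PT n} (hα : IsIsotone α) : kerMin α ∈ LS n := by
  refine ⟨fun x y a b hx hy hxy => ?_, fun x a hx => ?_⟩
  · obtain ⟨⟨p, hp⟩, rfl⟩ := kerMin_eq_some_iff.1 hx
    obtain ⟨⟨q, hq⟩, rfl⟩ := kerMin_eq_some_iff.1 hy
    exact fiberMin_mono hα hp hq hxy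
  · obtain ⟨-, rfl⟩ := kerMin_eq_some_iff.1 hx
    exact fiberMin_le α x

lemma comp_kerMin_self (α : PT n) : comp (kerMin α) (kerMin α) = kerMin α := by
  funext x
  cases hx : α x with
  | none => simp [comp, kerMin, hx]
  | some p =>
    have hm : α (fiberMin α x) = some p := (apply_fiberMin α x).trans hx
    simp [comp, kerMin, hx, hm, fiberMin_congr α (apply_fiberMin α x)]

end KerMin

theorem LS_abundant (n : ℕ) (α : PT n) (hα : α ∈ LS n) :
    (∃ ε ∈ LS n, comp ε ε = ε ∧ LStar n α ε) ∧
      (∃ ε ∈ LS n, comp ε ε = ε ∧ RStar n α ε) :=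
  ⟨⟨idOn (Im α), idOn_mem_LS _, comp_idOn_self _, LStar_of_Im_eq (Im_idOn _).symm⟩,
    ⟨kerMin α, kerMin_mem_LS hα.1, comp_kerMin_self α,
      RStar_of_ker_eq (fun u v => (kerMin_eq_kerMin_iff α u v).symm)
        (fun u => (kerMin_eq_none_iff α u).symm)⟩⟩
end
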